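/- Let (I₁, R₁) be a transition system over a type C₁ (the concrete semantics of a program) and (I₂, R₂) a transition system over a type C₂ (its symbolic semantics). Suppose H : C₁ → C₂ → Prop is a simulation from the first system to the second and H' : C₂ → C₁ → Prop is a simulation from the second system to the first, and let φ₁ : C₁ → Prop and φ₂ : C₂ → Prop be properties such that whenever H(c₁, c₂) holds, φ₂(c₂) implies φ₁(c₁), and whenever H'(c₂, c₁) holds, φ₁(c₁) implies φ₂(c₂). Then for every natural number k, the k-bounded invariant property φ₁^k holds in the concrete system if and only if there is no initialized path d₀, d₁, …, d_k of length k in the symbolic system with ¬φ₂(d_i) for some 0 ≤ i ≤ k (i.e., if and only if the symbolic counter-example formula path(d₀,…,d_k) ∧ ⋁_{i=0}^{k} ¬φ₂(d_i) is unsatisfiable). -/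

import Mathlib

/-- `c` is an initialized path of length `k`: `I (c 0)` holds and
`R (c i) (c (i+1))` for all `0 ≤ i < k`. -/
def IsInitPath {C : Type*} (I : C → Prop) (R : C → C → Prop) (k : ℕ) (c : ℕ → C) : Prop :=
  I (c 0) ∧ ∀ i < k, R (c i) (c (i + 1))

/-- The `k`-bounded invariant property `φ^k`: along every initialized path of
length `k`, `φ` holds at every index `i ≤ k`. -/
def BoundedInvariant {C : Type*} (I : C → Prop) (R : C → C → Prop) (φ : C → Prop) (k : ℕ) : Prop :=
  ∀ c : ℕ → C, IsInitPath I R k c → ∀ i ≤ k, φ (c i)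

/-- `H` is a simulation from the system `(I₁, R₁)` to the system `(I₂, R₂)`. -/
def IsSimulation {C₁ C₂ : Type*} (I₁ : C₁ → Prop) (R₁ : C₁ → C₁ → Prop)
    (I₂ : C₂ → Prop) (R₂ : C₂ → C₂ → Prop) (H : C₁ → C₂ → Prop) : Prop :=
  (∀ c₁, I₁ c₁ → ∃ c₂, I₂ c₂ ∧ H c₁ c₂) ∧
  (∀ c₁ c₂ c₁', H c₁ c₂ → R₁ c₁ c₁' → ∃ c₂', R₂ c₂ c₂' ∧ H c₁' c₂')

/-! A simulation lifts every initialized path of length `k`, step by step, to an initialized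
path of the other system that stays `H`-related to it. Hence the two compatibility conditions
transfer `k`-bounded invariants in both directions, so `φ₁^k ↔ φ₂^k`, and `φ₂^k` is exactly the
absence of a symbolic counter-example. -/

namespace IsInitPath

variable {C : Type*} {I : C → Prop} {R : C → C → Prop} {k : ℕ} {c : ℕ → C}

theorem of_succ (hc : IsInitPath I R (k + 1) c) : IsInitPath I R k c :=
  ⟨hc.1, fun i hi => hc.2 i (hi.trans k.lt_succ_self)⟩

theorem update_succ (hc : IsInitPath I R k c) {x : C} (hx : R (c k) x) :
    IsInitPath I R (k + 1) (Function.update c (k + 1) x) := by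
  refine ⟨by simpa [Function.update_of_ne] using hc.1, fun i hi => ?_⟩
  rcases Nat.lt_succ_iff_lt_or_eq.mp hi with hik | rfl
  · rw [Function.update_of_ne (hik.trans k.lt_succ_self).ne,
      Function.update_of_ne (Nat.succ_lt_succ hik).ne]
    exact hc.2 i hik
  · simpa using hx

end IsInitPath

theorem boundedInvariant_iff_not_exists_counterexample {C : Type*} (I : C → Prop)
    (R : C → C → Prop) (φ : C → Prop) (k : ℕ) :
    BoundedInvariant I R φ k ↔ ¬ ∃ d : ℕ → C, IsInitPath I R k d ∧ ∃ i ≤ k, ¬ φ (d i) := by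
  simp [BoundedInvariant]

namespace IsSimulation

variable {C₁ C₂ : Type*} {I₁ : C₁ → Prop} {R₁ : C₁ → C₁ → Prop}
  {I₂ : C₂ → Prop} {R₂ : C₂ → C₂ → Prop} {H : C₁ → C₂ → Prop}

theorem exists_initPath (hH : IsSimulation I₁ R₁ I₂ R₂ H) {k : ℕ} {c : ℕ → C₁}
    (hc : IsInitPath I₁ R₁ k c) :
    ∃ d : ℕ → C₂, IsInitPath I₂ R₂ k d ∧ ∀ i ≤ k, H (c i) (d i) := by
  induction k with
  | zero =>
    obtain ⟨d₀, hd₀, hH₀⟩ := hH.1 (c 0) hc.1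
    refine ⟨fun _ => d₀, ⟨hd₀, fun i hi => absurd hi i.not_lt_zero⟩, fun i hi => ?_⟩
    obtain rfl := Nat.le_zero.mp hi
    exact hH₀
  | succ k ih =>
    obtain ⟨d, hd, hHd⟩ := ih hc.of_succ
    obtain ⟨x, hR, hHx⟩ := hH.2 (c k) (d k) (c (k + 1)) (hHd k le_rfl) (hc.2 k k.lt_succ_self)
    refine ⟨Function.update d (k + 1) x, hd.update_succ hR, fun i hi => ?_⟩
    rcases Nat.le_succ_iff.mp hi with hik | rfl
    · simpa [Function.update_of_ne (Nat.lt_succ_of_le hik).ne] using hHd i hik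
    · simpa using hHx

theorem boundedInvariant (hH : IsSimulation I₁ R₁ I₂ R₂ H) {φ₁ : C₁ → Prop} {φ₂ : C₂ → Prop}
    (hφ : ∀ c₁ c₂, H c₁ c₂ → φ₂ c₂ → φ₁ c₁) {k : ℕ} (h : BoundedInvariant I₂ R₂ φ₂ k) :
    BoundedInvariant I₁ R₁ φ₁ k := by
  intro c hc i hi
  obtain ⟨d, hd, hHd⟩ := hH.exists_initPath hc
  exact hφ (c i) (d i) (hHd i hi) (h d hd i hi)

end IsSimulation

theorem concrete_bounded_invariant_iff_symbolic_counterexample_unsat {C₁ C₂ : Type*}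
    (I₁ : C₁ → Prop) (R₁ : C₁ → C₁ → Prop)
    (I₂ : C₂ → Prop) (R₂ : C₂ → C₂ → Prop)
    (H : C₁ → C₂ → Prop) (hH : IsSimulation I₁ R₁ I₂ R₂ H)
    (H' : C₂ → C₁ → Prop) (hH' : IsSimulation I₂ R₂ I₁ R₁ H')
    (φ₁ : C₁ → Prop) (φ₂ : C₂ → Prop)
    (hφ : ∀ c₁ c₂, H c₁ c₂ → φ₂ c₂ → φ₁ c₁)
    (hφ' : ∀ c₂ c₁, H' c₂ c₁ → φ₁ c₁ → φ₂ c₂) :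
    ∀ k : ℕ, BoundedInvariant I₁ R₁ φ₁ k ↔
      ¬ ∃ d : ℕ → C₂, IsInitPath I₂ R₂ k d ∧ ∃ i ≤ k, ¬ φ₂ (d i) := by
  intro k
  rw [← boundedInvariant_iff_not_exists_counterexample]
  exact ⟨hH'.boundedInvariant hφ', hH.boundedInvariant hφ⟩
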